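/- arXiv:2211.12977 — 2 statements merged into one kernel-verified Lean document; each statement's English description precedes it below -/
import Mathlib

section
/- Weak LP duality for Delsarte's LP: if g : {0,1}^n → ℝ satisfies ĝ ≥ 0, ĝ(0) > 0, and g(x) ≤ 0 for all x with |x| ≥ d, then every code C ⊆ {0,1}^n with minimum distance at least d satisfies |C| ≤ g(0)/ĝ(0). -/
open Finset

/-- Hamming weight of a vector in `{0,1}^n`. -/
def wt {n : ℕ} (x : Fin n → ZMod 2) : ℕ := (Finset.univ.filter fun i => x i ≠ 0).card

/-- Fourier transform on the cube: `f̂(x) = 2^{-n} ∑_y f(y) (-1)^{⟨x,y⟩}`. -/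
noncomputable def ft {n : ℕ} (f : (Fin n → ZMod 2) → ℝ) : (Fin n → ZMod 2) → ℝ :=
  fun x => (∑ y, f y * (-1:ℝ)^(∑ i, (x i * y i).val)) / (2:ℝ)^n

/-- sign character on ZMod 2 -/
noncomputable def ee (a : ZMod 2) : ℝ := (-1 : ℝ) ^ a.val

lemma zmod2_val_one : (1 : ZMod 2).val = 1 := rfl

lemma ee_zero : ee 0 = 1 := by simp [ee]

lemma ee_one : ee 1 = -1 := by simp [ee, zmod2_val_one]

lemma ee_add (a b : ZMod 2) : ee (a + b) = ee a * ee b := by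
  have h11 : (1 + 1 : ZMod 2) = 0 := by decide
  have h : ∀ a : ZMod 2, a = 0 ∨ a = 1 := by decide
  rcases h a with rfl | rfl <;> rcases h b with rfl | rfl <;>
    simp [h11, ee_zero, ee_one]

lemma ee_sum {ι : Type*} (s : Finset ι) (f : ι → ZMod 2) :
    ee (∑ i ∈ s, f i) = ∏ i ∈ s, ee (f i) := by
  classical
  induction s using Finset.cons_induction with
  | empty => simp [ee_zero]
  | cons a s ha ih => rw [Finset.sum_cons, Finset.prod_cons, ee_add, ih]

lemma ft_eq {n : ℕ} (g : (Fin n → ZMod 2) → ℝ) (x : Fin n → ZMod 2) :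
    ft g x = (∑ y, g y * ee (∑ i, x i * y i)) / (2:ℝ)^n := by
  unfold ft
  congr 1
  refine Finset.sum_congr rfl fun y _ => ?_
  congr 1
  rw [ee_sum, ← Finset.prod_pow_eq_pow_sum]
  rfl

lemma orth {n : ℕ} (w : Fin n → ZMod 2) :
    ∑ x : Fin n → ZMod 2, ee (∑ i, x i * w i) = if w = 0 then (2:ℝ)^n else 0 := by
  by_cases hw : w = 0
  · subst hw
    simp [ee_zero, Finset.card_univ]
  · simp only [hw, if_false]
    obtain ⟨i0, hi0⟩ : ∃ i, w i ≠ 0 := by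
      by_contra h
      push_neg at h
      exact hw (funext fun i => h i)
    have hwi : w i0 = 1 := by
      have h : ∀ a : ZMod 2, a ≠ 0 → a = 1 := by decide
      exact h _ hi0
    set δ : Fin n → ZMod 2 := Pi.single i0 1 with hδ
    have key : ∀ x : Fin n → ZMod 2,
        ee (∑ i, (x + δ) i * w i) = - ee (∑ i, x i * w i) := by
      intro x
      have h1 : ∑ i, (x + δ) i * w i = (∑ i, x i * w i) + (∑ i, δ i * w i) := by
        rw [← Finset.sum_add_distrib]
        refine Finset.sum_congr rfl fun i _ => ?_
        simp [add_mul]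
      rw [h1, ee_add]
      have hδw : ∑ i, δ i * w i = 1 := by
        rw [Finset.sum_eq_single i0]
        · simp [hδ, hwi]
        · intro i _ hne
          simp [hδ, Pi.single_eq_of_ne hne]
        · intro h
          exact absurd (Finset.mem_univ i0) h
      rw [hδw, ee_one]
      ring
    have h2 : ∑ x : Fin n → ZMod 2, ee (∑ i, x i * w i)
        = ∑ x : Fin n → ZMod 2, ee (∑ i, (x + δ) i * w i) :=
      (Fintype.sum_equiv (Equiv.addRight δ) _ _ (fun x => rfl)).symm
    have h3 : ∑ x : Fin n → ZMod 2, ee (∑ i, x i * w i)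
        = - ∑ x : Fin n → ZMod 2, ee (∑ i, x i * w i) := by
      calc ∑ x : Fin n → ZMod 2, ee (∑ i, x i * w i)
          = ∑ x : Fin n → ZMod 2, ee (∑ i, (x + δ) i * w i) := h2
        _ = ∑ x : Fin n → ZMod 2, - ee (∑ i, x i * w i) :=
            Finset.sum_congr rfl fun x _ => key x
        _ = - ∑ x : Fin n → ZMod 2, ee (∑ i, x i * w i) := by
            rw [Finset.sum_neg_distrib]
    linarith

lemma inversion {n : ℕ} (g : (Fin n → ZMod 2) → ℝ) (z : Fin n → ZMod 2) :
    ∑ x, ft g x * ee (∑ i, x i * z i) = g z := by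
  have h2n : (0:ℝ) < (2:ℝ)^n := by positivity
  calc ∑ x : Fin n → ZMod 2, ft g x * ee (∑ i, x i * z i)
      = ∑ x : Fin n → ZMod 2, ∑ y : Fin n → ZMod 2,
          g y * ee (∑ i, x i * (y + z) i) / (2:ℝ)^n := by
        refine Finset.sum_congr rfl fun x _ => ?_
        rw [ft_eq, div_mul_eq_mul_div, Finset.sum_mul, Finset.sum_div]
        refine Finset.sum_congr rfl fun y _ => ?_
        congr 1
        rw [mul_assoc]
        congr 1
        rw [← ee_add, ← Finset.sum_add_distrib]
        congr 1
        refine Finset.sum_congr rfl fun i _ => ?_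
        simp [mul_add]
    _ = ∑ y : Fin n → ZMod 2,
          g y * (∑ x : Fin n → ZMod 2, ee (∑ i, x i * (y + z) i)) / (2:ℝ)^n := by
        rw [Finset.sum_comm]
        refine Finset.sum_congr rfl fun y _ => ?_
        rw [← Finset.sum_div, ← Finset.mul_sum, mul_div_assoc]
    _ = g z := by
        rw [Finset.sum_eq_single z]
        · rw [orth]
          have hzz : (z + z : Fin n → ZMod 2) = 0 :=
            funext fun i => CharTwo.add_self_eq_zero _
          rw [if_pos hzz]
          field_simp
        · intro y _ hy
          rw [orth]
          have hne : y + z ≠ 0 := by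
            intro h
            apply hy
            have hab : ∀ a b : ZMod 2, a + b = 0 → a = b := by decide
            exact funext fun i => hab _ _ (congrFun h i)
          rw [if_neg hne]
          simp
        · intro h; exact absurd (Finset.mem_univ z) h

/-- Weak LP duality for Delsarte's LP: any dual feasible solution upper bounds the size of
every code of minimum distance at least `d`. -/
theorem delsarte_weak_duality (n d : ℕ) (g : (Fin n → ZMod 2) → ℝ)
    (hg1 : ∀ x, 0 ≤ ft g x)
    (hg2 : 0 < ft g 0)
    (hg3 : ∀ x, d ≤ wt x → g x ≤ 0)
    (C : Finset (Fin n → ZMod 2))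
    (hC : ∀ x ∈ C, ∀ y ∈ C, x ≠ y → d ≤ wt (x + y)) :
    (C.card : ℝ) ≤ g 0 / ft g 0 := by
  classical
  have hg0 : 0 ≤ g 0 := by
    rw [← inversion g 0]
    apply Finset.sum_nonneg
    intro x _
    have h : ∑ i, x i * (0 : Fin n → ZMod 2) i = 0 := by simp
    rw [h, ee_zero, mul_one]
    exact hg1 x
  rcases Nat.eq_zero_or_pos C.card with hc | hc
  · rw [hc]
    push_cast
    positivity
  set S : ℝ := ∑ c ∈ C, ∑ c' ∈ C, g (c + c') with hS
  have upper : S ≤ (C.card : ℝ) * g 0 := by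
    rw [hS]
    calc ∑ c ∈ C, ∑ c' ∈ C, g (c + c') ≤ ∑ c ∈ C, g 0 := by
          refine Finset.sum_le_sum fun c hcmem => ?_
          rw [← Finset.add_sum_erase C _ hcmem]
          have h1 : g (c + c) = g 0 := by
            rw [show (c + c : Fin n → ZMod 2) = 0 from
              funext fun i => CharTwo.add_self_eq_zero _]
          have h2 : ∑ c' ∈ C.erase c, g (c + c') ≤ 0 := by
            apply Finset.sum_nonpos
            intro c' hc'
            exact hg3 _ (hC c hcmem c' (Finset.mem_of_mem_erase hc')
              (fun h => (Finset.ne_of_mem_erase hc') h.symm))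
          linarith
      _ = (C.card : ℝ) * g 0 := by rw [Finset.sum_const, nsmul_eq_mul]
  have expand : S = ∑ x : Fin n → ZMod 2,
      ft g x * (∑ c ∈ C, ee (∑ i, x i * c i))^2 := by
    rw [hS]
    calc ∑ c ∈ C, ∑ c' ∈ C, g (c + c')
        = ∑ c ∈ C, ∑ c' ∈ C, ∑ x : Fin n → ZMod 2,
            ft g x * ee (∑ i, x i * (c + c') i) := by
          exact Finset.sum_congr rfl fun c _ =>
            Finset.sum_congr rfl fun c' _ => (inversion g _).symm
      _ = ∑ c ∈ C, ∑ x : Fin n → ZMod 2, ∑ c' ∈ C,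
            ft g x * ee (∑ i, x i * (c + c') i) := by
          exact Finset.sum_congr rfl fun c _ => Finset.sum_comm
      _ = ∑ x : Fin n → ZMod 2, ∑ c ∈ C, ∑ c' ∈ C,
            ft g x * ee (∑ i, x i * (c + c') i) := Finset.sum_comm
      _ = ∑ x : Fin n → ZMod 2, ft g x * (∑ c ∈ C, ee (∑ i, x i * c i))^2 := by
          refine Finset.sum_congr rfl fun x _ => ?_
          rw [sq, Finset.sum_mul_sum, Finset.mul_sum]
          refine Finset.sum_congr rfl fun c _ => ?_
          rw [Finset.mul_sum]
          refine Finset.sum_congr rfl fun c' _ => ?_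
          congr 1
          rw [← ee_add, ← Finset.sum_add_distrib]
          congr 1
          exact Finset.sum_congr rfl fun i _ => by simp [mul_add]
  have lower : ft g 0 * (C.card : ℝ)^2 ≤ S := by
    rw [expand]
    have h0 : (∑ c ∈ C, ee (∑ i, (0 : Fin n → ZMod 2) i * c i)) = (C.card : ℝ) := by
      have h : ∀ c : Fin n → ZMod 2, ∑ i, (0 : Fin n → ZMod 2) i * c i = 0 := by
        intro c; simp
      rw [Finset.sum_congr rfl fun c _ => by rw [h c, ee_zero]]
      simp
    have h1 := Finset.single_le_sum
      (f := fun x => ft g x * (∑ c ∈ C, ee (∑ i, x i * c i))^2)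
      (fun x _ => mul_nonneg (hg1 x) (sq_nonneg _)) (Finset.mem_univ 0)
    beta_reduce at h1
    rw [h0] at h1
    exact h1
  have key : (C.card : ℝ) * ft g 0 ≤ g 0 := by
    have hcpos : (0:ℝ) < C.card := by exact_mod_cast hc
    nlinarith
  rw [le_div_iff₀ hg2]
  exact key
end

section
/- Let r be chosen so that d − ε ∈ [z_{1,r+1}, z_{1,r}], where z_{1,r} denotes the first root of K_r. Define Λ(x) = Σ_{i=0}^r binom(n,i)^{-1} K_i(d−ε) K_i(|x|) for x ∈ {0,1}^n. Then Λ̂(0) = 1 and Λ̂ ≥ 0, and Λ̂ is supported on the Hamming ball of radius r. -/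
open Finset

/-- Generalized binomial coefficient `C(t, j)` for real `t`. -/
noncomputable def genChoose (t : ℝ) (j : ℕ) : ℝ :=
  (∏ i ∈ Finset.range j, (t - i)) / (Nat.factorial j)

/-- The Krawtchouk polynomial `K_k` (parameter `n`), normalized by `K_k(0) = C(n,k)`. -/
noncomputable def kraw (n k : ℕ) (t : ℝ) : ℝ :=
  ∑ j ∈ Finset.range (k+1), (-1:ℝ)^j * genChoose t j * genChoose ((n:ℝ) - t) (k - j)

/-- `z` is the first (smallest positive) root of `K_k`. -/
def IsFirstRoot (n k : ℕ) (z : ℝ) : Prop :=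
  0 < z ∧ kraw n k z = 0 ∧ ∀ t : ℝ, 0 < t → t < z → kraw n k t ≠ 0

lemma prod_range_eq_descPochhammer (t : ℝ) (j : ℕ) :
    ∏ i ∈ Finset.range j, (t - i) = (descPochhammer ℝ j).eval t := by
  induction j with
  | zero => simp
  | succ j ih => rw [Finset.prod_range_succ, ih, descPochhammer_succ_eval]

lemma genChoose_nat (m j : ℕ) : genChoose (m : ℝ) j = m.choose j := by
  rw [genChoose, prod_range_eq_descPochhammer, descPochhammer_eval_eq_descFactorial,
    Nat.descFactorial_eq_factorial_mul_choose]
  push_cast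
  rw [mul_comm, mul_div_assoc, div_self (by positivity), mul_one]

lemma genChoose_zero (t : ℝ) : genChoose t 0 = 1 := by simp [genChoose]

lemma genChoose_succ (t : ℝ) (j : ℕ) :
    ((j:ℝ)+1) * genChoose t (j+1) = (t - j) * genChoose t j := by
  have h : (Nat.factorial (j+1) : ℝ) = ((j:ℝ)+1) * (Nat.factorial j) := by
    push_cast [Nat.factorial_succ]; ring
  rw [genChoose, genChoose, Finset.prod_range_succ, h]
  field_simp

lemma kraw_zero_left (n : ℕ) (t : ℝ) : kraw n 0 t = 1 := by
  simp [kraw, genChoose_zero]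

lemma kraw_at_zero (n k : ℕ) : kraw n k 0 = n.choose k := by
  rw [kraw]
  rw [Finset.sum_eq_single 0]
  · simp [genChoose_zero, genChoose_nat]
  · intro j hj hj0
    have : genChoose 0 j = 0 := by
      rw [genChoose, Finset.prod_eq_zero (Finset.mem_range.2 (Nat.pos_of_ne_zero hj0))]
      · simp
      · simp
    simp [this]
  · simp

lemma continuous_kraw (n k : ℕ) : Continuous (kraw n k) := by
  apply continuous_finset_sum
  intro j _
  apply Continuous.mul
  apply Continuous.mul continuous_const
  · unfold genChoose; fun_prop
  · unfold genChoose; fun_prop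

lemma kraw_rec (n k : ℕ) (t : ℝ) :
    ((k:ℝ)+2) * kraw n (k+2) t
      = ((n:ℝ) - 2*t) * kraw n (k+1) t - ((n:ℝ) - (k:ℝ)) * kraw n k t := by
  have hA := genChoose_succ t
  have hB := genChoose_succ ((n:ℝ) - t)
  have expand : ((k:ℝ)+2) * kraw n (k+2) t
      = (∑ j ∈ Finset.range (k+3), (-1:ℝ)^j * ((j:ℝ) * genChoose t j) * genChoose ((n:ℝ)-t) (k+2-j))
      + (∑ j ∈ Finset.range (k+3), (-1:ℝ)^j * genChoose t j * (((k+2-j : ℕ):ℝ) * genChoose ((n:ℝ)-t) (k+2-j))) := by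
    rw [kraw, Finset.mul_sum, ← Finset.sum_add_distrib]
    refine Finset.sum_congr rfl fun j hj => ?_
    have hj' : j ≤ k+2 := by have := Finset.mem_range.1 hj; omega
    rw [Nat.cast_sub hj']
    push_cast
    ring
  have hT1 : (∑ j ∈ Finset.range (k+3), (-1:ℝ)^j * ((j:ℝ) * genChoose t j) * genChoose ((n:ℝ)-t) (k+2-j))
      = -∑ j ∈ Finset.range (k+2), (-1:ℝ)^j * ((t - j) * genChoose t j) * genChoose ((n:ℝ)-t) (k+1-j) := by
    rw [show k+3 = (k+2)+1 from rfl, Finset.sum_range_succ' _ (k+2)]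
    simp only [Nat.cast_zero, zero_mul, mul_zero, pow_zero, one_mul, add_zero]
    rw [← Finset.sum_neg_distrib]
    refine Finset.sum_congr rfl fun j hj => ?_
    have h1 : k+2-(j+1) = k+1-j := by omega
    have h2 : ((j:ℝ)+1) * genChoose t (j+1) = (t - j) * genChoose t j := hA j
    rw [h1]
    push_cast
    calc (-1:ℝ)^(j+1) * ((((j:ℝ))+1) * genChoose t (j+1)) * genChoose ((n:ℝ)-t) (k+1-j)
        = -((-1:ℝ)^j * ((((j:ℝ))+1) * genChoose t (j+1)) * genChoose ((n:ℝ)-t) (k+1-j)) := by ring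
      _ = -((-1)^j * ((t - ↑j) * genChoose t j) * genChoose (↑n - t) (k + 1 - j)) := by rw [h2]
  have hT2 : (∑ j ∈ Finset.range (k+3), (-1:ℝ)^j * genChoose t j * (((k+2-j : ℕ):ℝ) * genChoose ((n:ℝ)-t) (k+2-j)))
      = ∑ j ∈ Finset.range (k+2), (-1:ℝ)^j * genChoose t j * (((n:ℝ) - t - ((k+1-j:ℕ):ℝ)) * genChoose ((n:ℝ)-t) (k+1-j)) := by
    rw [show k+3 = (k+2)+1 from rfl, Finset.sum_range_succ]
    simp only [Nat.sub_self, Nat.cast_zero, zero_mul, mul_zero, add_zero]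
    refine Finset.sum_congr rfl fun j hj => ?_
    have hj' : j ≤ k+1 := by have := Finset.mem_range.1 hj; omega
    have h1 : k+2-j = (k+1-j)+1 := by omega
    rw [h1, show ((k+1-j+1:ℕ):ℝ) = ((k+1-j:ℕ):ℝ)+1 by push_cast; ring, hB (k+1-j)]
  rw [expand, hT1, hT2]
  -- now combine into (n-2t) * kraw (k+1) - U
  have step2 : (-∑ j ∈ Finset.range (k+2), (-1:ℝ)^j * ((t - j) * genChoose t j) * genChoose ((n:ℝ)-t) (k+1-j))
      + (∑ j ∈ Finset.range (k+2), (-1:ℝ)^j * genChoose t j * (((n:ℝ) - t - ((k+1-j:ℕ):ℝ)) * genChoose ((n:ℝ)-t) (k+1-j)))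
      = ((n:ℝ) - 2*t) * kraw n (k+1) t
        - ((∑ j ∈ Finset.range (k+2), (-1:ℝ)^j * genChoose t j * (((k+1-j:ℕ):ℝ) * genChoose ((n:ℝ)-t) (k+1-j)))
          - (∑ j ∈ Finset.range (k+2), (-1:ℝ)^j * ((j:ℝ) * genChoose t j) * genChoose ((n:ℝ)-t) (k+1-j))) := by
    rw [kraw, Finset.mul_sum]
    rw [← Finset.sum_neg_distrib, ← Finset.sum_add_distrib, ← Finset.sum_sub_distrib, ← Finset.sum_sub_distrib]
    refine Finset.sum_congr rfl fun j hj => ?_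
    have hj' : j ≤ k+1 := by have := Finset.mem_range.1 hj; omega
    have h2 : ((k+1-j:ℕ):ℝ) = (k:ℝ)+1-j := by rw [Nat.cast_sub hj']; push_cast; ring
    rw [h2]
    ring
  rw [step2]
  -- now U = (n-k) * kraw n k t
  have hU1 : (∑ j ∈ Finset.range (k+2), (-1:ℝ)^j * genChoose t j * (((k+1-j:ℕ):ℝ) * genChoose ((n:ℝ)-t) (k+1-j)))
      = ∑ j ∈ Finset.range (k+1), (-1:ℝ)^j * genChoose t j * (((n:ℝ) - t - ((k-j:ℕ):ℝ)) * genChoose ((n:ℝ)-t) (k-j)) := by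
    rw [show k+2 = (k+1)+1 from rfl, Finset.sum_range_succ]
    simp only [Nat.sub_self, Nat.cast_zero, zero_mul, mul_zero, add_zero]
    refine Finset.sum_congr rfl fun j hj => ?_
    have hj' : j ≤ k := by have := Finset.mem_range.1 hj; omega
    have h1 : k+1-j = (k-j)+1 := by omega
    rw [h1, show ((k-j+1:ℕ):ℝ) = ((k-j:ℕ):ℝ)+1 by push_cast; ring, hB (k-j)]
  have hU2 : (∑ j ∈ Finset.range (k+2), (-1:ℝ)^j * ((j:ℝ) * genChoose t j) * genChoose ((n:ℝ)-t) (k+1-j))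
      = -∑ j ∈ Finset.range (k+1), (-1:ℝ)^j * ((t - j) * genChoose t j) * genChoose ((n:ℝ)-t) (k-j) := by
    rw [show k+2 = (k+1)+1 from rfl, Finset.sum_range_succ' _ (k+1)]
    simp only [Nat.cast_zero, zero_mul, mul_zero, pow_zero, one_mul, add_zero]
    rw [← Finset.sum_neg_distrib]
    refine Finset.sum_congr rfl fun j hj => ?_
    have h1 : k+1-(j+1) = k-j := by omega
    have h2 := hA j
    rw [h1]
    push_cast
    calc (-1:ℝ)^(j+1) * ((((j:ℝ))+1) * genChoose t (j+1)) * genChoose ((n:ℝ)-t) (k-j)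
        = -((-1:ℝ)^j * ((((j:ℝ))+1) * genChoose t (j+1)) * genChoose ((n:ℝ)-t) (k-j)) := by ring
      _ = -((-1)^j * ((t - ↑j) * genChoose t j) * genChoose (↑n - t) (k - j)) := by rw [h2]
  rw [hU1, hU2]
  have final : (∑ j ∈ Finset.range (k+1), (-1:ℝ)^j * genChoose t j * (((n:ℝ) - t - ((k-j:ℕ):ℝ)) * genChoose ((n:ℝ)-t) (k-j)))
      - (-∑ j ∈ Finset.range (k+1), (-1:ℝ)^j * ((t - j) * genChoose t j) * genChoose ((n:ℝ)-t) (k-j))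
      = ((n:ℝ) - (k:ℝ)) * kraw n k t := by
    rw [kraw, Finset.mul_sum, sub_neg_eq_add, ← Finset.sum_add_distrib]
    refine Finset.sum_congr rfl fun j hj => ?_
    have hj' : j ≤ k := by have := Finset.mem_range.1 hj; omega
    have h2 : ((k-j:ℕ):ℝ) = (k:ℝ)-j := by rw [Nat.cast_sub hj']
    rw [h2]
    ring
  rw [final]

lemma kraw_nonneg_of_le_firstRoot (n r : ℕ) (hr : r + 1 ≤ n) (z : ℝ)
    (hz : IsFirstRoot n r z) :
    ∀ i ≤ r, ∀ t : ℝ, 0 ≤ t → t ≤ z → 0 ≤ kraw n i t := by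
  have hpos0 : ∀ i ≤ r, 0 < kraw n i 0 := by
    intro i hi
    rw [kraw_at_zero]
    exact_mod_cast Nat.choose_pos (le_trans hi (by omega))
  set Z : Set ℝ := {t | t ∈ Set.Icc (0:ℝ) z ∧ ∃ i ≤ r, kraw n i t = 0} with hZ
  have hne : z ∈ Z := ⟨⟨le_of_lt hz.1, le_refl z⟩, r, le_refl r, hz.2.1⟩
  have hclosed : IsClosed Z := by
    have : Z = ⋃ i ∈ Finset.range (r+1), (Set.Icc (0:ℝ) z ∩ (kraw n i)⁻¹' {0}) := by
      ext t
      simp only [hZ, Set.mem_setOf_eq, Set.mem_iUnion, Set.mem_inter_iff, Set.mem_preimage,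
        Set.mem_singleton_iff, Finset.mem_range]
      constructor
      · rintro ⟨ht, i, hi, hk⟩; exact ⟨i, by omega, ht, hk⟩
      · rintro ⟨i, hi, ht, hk⟩; exact ⟨ht, i, by omega, hk⟩
    rw [this]
    apply isClosed_biUnion_finset
    intro i _
    exact isClosed_Icc.inter (isClosed_singleton.preimage (continuous_kraw n i))
  have hbdd : BddBelow Z := ⟨0, fun t ht => ht.1.1⟩
  set s := sInf Z with hs
  have hsmem : s ∈ Z := hclosed.csInf_mem ⟨z, hne⟩ hbdd
  have hs0 : 0 ≤ s := hsmem.1.1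
  have hsz : s ≤ z := hsmem.1.2
  -- positivity below s
  have hpos : ∀ i ≤ r, ∀ t : ℝ, 0 ≤ t → t < s → 0 < kraw n i t := by
    intro i hi t ht0 hts
    by_contra h
    push_neg at h
    have : (0:ℝ) ∈ Set.Icc (kraw n i t) (kraw n i 0) := ⟨h, (hpos0 i hi).le⟩
    obtain ⟨c, hc, hfc⟩ := intermediate_value_Icc' ht0 (continuous_kraw n i).continuousOn this
    have hcZ : c ∈ Z := ⟨⟨hc.1, le_trans hc.2 (le_trans hts.le hsz)⟩, i, hi, hfc⟩
    exact absurd (csInf_le hbdd hcZ) (by push_neg; exact lt_of_le_of_lt hc.2 hts)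
  -- nonnegativity at s
  have hnn : ∀ i ≤ r, 0 ≤ kraw n i s := by
    intro i hi
    by_contra h
    push_neg at h
    have : (0:ℝ) ∈ Set.Icc (kraw n i s) (kraw n i 0) := ⟨h.le, (hpos0 i hi).le⟩
    obtain ⟨c, hc, hfc⟩ := intermediate_value_Icc' hs0 (continuous_kraw n i).continuousOn this
    have hcs : c < s := lt_of_le_of_ne hc.2 (by rintro rfl; rw [hfc] at h; exact lt_irrefl 0 h)
    have hcZ : c ∈ Z := ⟨⟨hc.1, le_trans hc.2 hsz⟩, i, hi, hfc⟩
    exact absurd (csInf_le hbdd hcZ) (by push_neg; exact hcs)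
  -- minimal vanishing index at s
  obtain ⟨⟨_, _⟩, i, hi, hki⟩ := hsmem
  set S : Set ℕ := {j | j ≤ r ∧ kraw n j s = 0} with hS
  have hSne : S.Nonempty := ⟨i, hi, hki⟩
  set i0 := sInf S with hi0
  have hi0mem : i0 ∈ S := Nat.sInf_mem hSne
  have hi0ne : i0 ≠ 0 := by
    intro h
    have := hi0mem.2
    rw [h, kraw_zero_left] at this
    norm_num at this
  have hmin : ∀ j < i0, j ≤ r → kraw n j s ≠ 0 := by
    intro j hj hjr hk
    exact absurd (Nat.sInf_le (show j ∈ S from ⟨hjr, hk⟩)) (Nat.not_le.2 hj)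
  have hseqz : s = z := by
    rcases lt_or_eq_of_le hi0mem.1 with hlt | heq
    · -- contradiction case
      exfalso
      obtain ⟨m, hm⟩ : ∃ m, i0 = m + 1 := ⟨i0 - 1, by omega⟩
      have hki0 : kraw n (m+1) s = 0 := hm ▸ hi0mem.2
      have hrec := kraw_rec n m s
      rw [hki0] at hrec
      have hm2 : m + 2 ≤ r := by omega
      have hkm : 0 < kraw n m s := lt_of_le_of_ne (hnn m (by omega))
        (Ne.symm (hmin m (by omega) (by omega)))
      have hnm : (0:ℝ) < (n:ℝ) - m := by
        have : m + 1 < n := by omega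
        have := (Nat.cast_lt (α := ℝ)).2 this
        push_cast at this ⊢
        linarith
      have hlhs : 0 ≤ ((m:ℝ)+2) * kraw n (m+2) s := by
        apply mul_nonneg (by positivity) (hnn (m+2) hm2)
      nlinarith [hnn (m+2) hm2]
    · -- i0 = r : s is a root of kraw n r
      have hsne0 : s ≠ 0 := by
        intro h
        have := hi0mem.2
        rw [h] at this
        exact absurd this (ne_of_gt (hpos0 i0 hi0mem.1))
      have hspos : 0 < s := lt_of_le_of_ne hs0 (Ne.symm hsne0)
      by_contra hne'
      have hslt : s < z := lt_of_le_of_ne hsz hne'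
      exact hz.2.2 s hspos hslt (heq ▸ hi0mem.2)
  intro i hi t ht0 htz
  rcases lt_or_eq_of_le htz with h | h
  · exact (hpos i hi t ht0 (hseqz ▸ h)).le
  · rw [h, ← hseqz]
    exact hnn i hi

lemma neg_one_pow_congr_of_mod (a b : ℕ) (h : a % 2 = b % 2) : (-1:ℝ)^a = (-1:ℝ)^b := by
  conv_lhs => rw [← Nat.div_add_mod a 2]
  conv_rhs => rw [← Nat.div_add_mod b 2]
  rw [pow_add, pow_add, pow_mul, pow_mul]
  norm_num [h]

lemma val_mul_eq_ite (a b : ZMod 2) : (a * b).val = if a ≠ 0 ∧ b ≠ 0 then 1 else 0 := by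
  revert a b; decide

/-- exponent as cardinality of intersection of supports -/
lemma exponent_eq_card {n : ℕ} (x z : Fin n → ZMod 2) :
    (∑ i, (x i * z i).val)
      = ((Finset.univ.filter fun j => x j ≠ 0) ∩ (Finset.univ.filter fun j => z j ≠ 0)).card := by
  rw [← Finset.filter_and]
  rw [Finset.card_filter]
  refine Finset.sum_congr rfl fun j _ => ?_
  rw [val_mul_eq_ite]

lemma zmod2_sum_flip (a b : ZMod 2) (h : a ≠ 0) : (a * b).val + (a * (b+1)).val = 1 := by
  revert a b; decide

lemma char_sum {n : ℕ} (w : Fin n → ZMod 2) :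
    ∑ y : Fin n → ZMod 2, (-1:ℝ)^(∑ i, (w i * y i).val)
      = if w = 0 then (2:ℝ)^n else 0 := by
  by_cases hw : w = 0
  · subst hw
    simp only [Pi.zero_apply, zero_mul, ZMod.val_zero, Finset.sum_const_zero, pow_zero, if_pos]
    rw [Finset.sum_const, Finset.card_univ, Fintype.card_fun]
    simp
  · rw [if_neg hw]
    obtain ⟨i0, hi0⟩ : ∃ i0, w i0 ≠ 0 := by
      by_contra h; push_neg at h; exact hw (funext h)
    apply Finset.sum_ninvolution (g := fun y => Function.update y i0 (y i0 + 1))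
    · intro y
      set e1 := ∑ i, (w i * y i).val with he1
      set e2 := ∑ i, (w i * Function.update y i0 (y i0 + 1) i).val with he2
      have hsplit1 : e1 = (w i0 * y i0).val + ∑ i ∈ {i0}ᶜ, (w i * y i).val :=
        Fintype.sum_eq_add_sum_compl i0 _
      have hsplit2 : e2 = (w i0 * (y i0 + 1)).val + ∑ i ∈ {i0}ᶜ, (w i * y i).val := by
        rw [he2, Fintype.sum_eq_add_sum_compl i0]
        congr 1
        · rw [Function.update_self]
        · refine Finset.sum_congr rfl fun i hi => ?_
          rw [Function.update_of_ne (by simpa using hi)]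
      have hodd : Odd (e1 + e2) := by
        rw [hsplit1, hsplit2]
        have := zmod2_sum_flip (w i0) (y i0) hi0
        refine ⟨∑ i ∈ {i0}ᶜ, (w i * y i).val, by omega⟩
      have hpow : (-1:ℝ)^(e1+e2) = -1 := Odd.neg_one_pow hodd
      have hsq : (-1:ℝ)^e1 * (-1:ℝ)^e1 = 1 := by
        rw [← pow_add]
        exact Even.neg_one_pow ⟨e1, rfl⟩
      have : (-1:ℝ)^e2 = -(-1:ℝ)^e1 := by
        calc (-1:ℝ)^e2 = ((-1:ℝ)^e1*(-1:ℝ)^e1) * (-1:ℝ)^e2 := by rw [hsq, one_mul]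
          _ = (-1:ℝ)^e1 * ((-1:ℝ)^(e1+e2)) := by rw [pow_add]; ring
          _ = -(-1:ℝ)^e1 := by rw [hpow]; ring
      rw [this]; ring
    · intro y _
      intro h
      have := congrFun h i0
      rw [Function.update_self] at this
      revert this
      generalize y i0 = a
      revert a; decide
    · intro y; exact Finset.mem_univ _
    · intro y
      funext i
      by_cases hi : i = i0
      · subst hi
        simp only [Function.update_self]
        generalize y i = a
        revert a; decide
      · simp [Function.update_of_ne hi]

lemma wt_le {n : ℕ} (y : Fin n → ZMod 2) : wt y ≤ n := by
  unfold wt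
  calc (Finset.univ.filter fun i => y i ≠ 0).card ≤ Finset.univ.card := Finset.card_filter_le _ _
    _ = n := by simp

lemma zmod2_ne_zero (a : ZMod 2) (h : a ≠ 0) : a = 1 := by revert a; decide

lemma sum_sphere {n : ℕ} (i : ℕ) (y : Fin n → ZMod 2) :
    ∑ z ∈ Finset.univ.filter (fun z : Fin n → ZMod 2 => wt z = i), (-1:ℝ)^(∑ j, (y j * z j).val)
      = kraw n i (wt y) := by
  classical
  set S : Finset (Fin n) := Finset.univ.filter (fun j => y j ≠ 0) with hS
  have hscard : S.card = wt y := rfl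
  -- Step B : transfer to powersetCard
  have stepB : ∑ z ∈ Finset.univ.filter (fun z : Fin n → ZMod 2 => wt z = i),
        (-1:ℝ)^(∑ j, (y j * z j).val)
      = ∑ A ∈ Finset.powersetCard i (Finset.univ : Finset (Fin n)), (-1:ℝ)^((S ∩ A).card) := by
    apply Finset.sum_nbij' (i := fun z => Finset.univ.filter (fun j => z j ≠ 0))
      (j := fun A => fun j => if j ∈ A then (1 : ZMod 2) else 0)
    · intro z hz
      rw [Finset.mem_powersetCard]
      exact ⟨Finset.subset_univ _, (Finset.mem_filter.1 hz).2⟩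
    · intro A hA
      rw [Finset.mem_filter]
      refine ⟨Finset.mem_univ _, ?_⟩
      rw [Finset.mem_powersetCard] at hA
      rw [← hA.2]
      unfold wt
      congr 1
      ext j
      simp only [Finset.mem_filter, Finset.mem_univ, true_and]
      split <;> simp_all
    · intro z hz
      funext j
      by_cases h : z j = 0 <;> simp [h, zmod2_ne_zero (z j)]
    · intro A hA
      ext j
      simp only [Finset.mem_filter, Finset.mem_univ, true_and]
      split <;> simp_all
    · intro z hz
      rw [exponent_eq_card]
  rw [stepB]
  -- Step C : fiberwise over the cardinality of the intersection
  have hmaps : ∀ A ∈ Finset.powersetCard i (Finset.univ : Finset (Fin n)),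
      (S ∩ A).card ∈ Finset.range (i+1) := by
    intro A hA
    rw [Finset.mem_powersetCard] at hA
    rw [Finset.mem_range]
    have := Finset.card_le_card (Finset.inter_subset_right (s₁ := S) (s₂ := A))
    omega
  rw [← Finset.sum_fiberwise_of_maps_to hmaps]
  -- inner sums are constant
  have hcard : ∀ j ∈ Finset.range (i+1),
      ((Finset.powersetCard i (Finset.univ : Finset (Fin n))).filter
        (fun A => (S ∩ A).card = j)).card = (S.card.choose j) * ((n - S.card).choose (i-j)) := by
    intro j hj
    have hcompl : (Sᶜ : Finset (Fin n)).card = n - S.card := by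
      rw [Finset.card_compl]
      simp
    rw [← Finset.card_powersetCard j S, ← hcompl, ← Finset.card_powersetCard (i-j) Sᶜ,
      ← Finset.card_product]
    apply Finset.card_nbij' (i := fun A => (A ∩ S, A \ S)) (j := fun q => q.1 ∪ q.2)
    · intro A hA
      simp only [Finset.mem_coe, Finset.mem_filter, Finset.mem_powersetCard] at hA
      obtain ⟨⟨_, hAcard⟩, hAS⟩ := hA
      rw [Finset.mem_coe, Finset.mem_product]
      constructor
      · rw [Finset.mem_powersetCard]
        exact ⟨Finset.inter_subset_right, by show (A ∩ S).card = j; rw [Finset.inter_comm]; exact hAS⟩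
      · rw [Finset.mem_powersetCard]
        constructor
        · intro a ha
          rw [Finset.mem_compl]
          exact (Finset.mem_sdiff.1 ha).2
        · show (A \ S).card = i - j
          have := Finset.card_inter_add_card_sdiff A S
          rw [Finset.inter_comm] at hAS
          omega
    · intro q hq
      rw [Finset.mem_coe, Finset.mem_product, Finset.mem_powersetCard, Finset.mem_powersetCard] at hq
      obtain ⟨⟨hq1, hq1c⟩, hq2, hq2c⟩ := hq
      have hdisj : Disjoint q.1 q.2 := by
        rw [Finset.disjoint_left]
        intro a ha1 ha2
        exact (Finset.mem_compl.1 (hq2 ha2)) (hq1 ha1)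
      have hjr : j ≤ i := by have := Finset.mem_range.1 hj; omega
      simp only [Finset.mem_coe, Finset.mem_filter, Finset.mem_powersetCard]
      have hinter : S ∩ (q.1 ∪ q.2) = q.1 := by
        rw [Finset.inter_union_distrib_left]
        have h1 : S ∩ q.1 = q.1 := by
          rw [Finset.inter_eq_right]; exact hq1
        have h2 : S ∩ q.2 = ∅ := by
          rw [← Finset.disjoint_iff_inter_eq_empty, Finset.disjoint_left]
          intro a haS ha2
          exact (Finset.mem_compl.1 (hq2 ha2)) haS
        rw [h1, h2, Finset.union_empty]
      refine ⟨⟨Finset.subset_univ _, ?_⟩, ?_⟩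
      · rw [Finset.card_union_of_disjoint hdisj, hq1c, hq2c]; omega
      · rw [hinter, hq1c]
    · intro A hA
      simp only [Finset.mem_coe, Finset.mem_filter, Finset.mem_powersetCard] at hA
      show A ∩ S ∪ A \ S = A
      rw [Finset.union_comm, Finset.sdiff_union_inter]
    · intro q hq
      rw [Finset.mem_coe, Finset.mem_product, Finset.mem_powersetCard, Finset.mem_powersetCard] at hq
      obtain ⟨⟨hq1, hq1c⟩, hq2, hq2c⟩ := hq
      have h1 : (q.1 ∪ q.2) ∩ S = q.1 := by
        rw [Finset.union_inter_distrib_right]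
        have ha : q.1 ∩ S = q.1 := by rw [Finset.inter_eq_left]; exact hq1
        have hb : q.2 ∩ S = ∅ := by
          rw [← Finset.disjoint_iff_inter_eq_empty, Finset.disjoint_left]
          intro a ha2 haS
          exact (Finset.mem_compl.1 (hq2 ha2)) haS
        rw [ha, hb, Finset.union_empty]
      have h2 : (q.1 ∪ q.2) \ S = q.2 := by
        ext a
        simp only [Finset.mem_sdiff, Finset.mem_union]
        constructor
        · rintro ⟨h | h, hns⟩
          · exact absurd (hq1 h) hns
          · exact h
        · intro h
          exact ⟨Or.inr h, fun hs => (Finset.mem_compl.1 (hq2 h)) hs⟩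
      rw [Prod.ext_iff]
      exact ⟨h1, h2⟩
  -- assemble
  have hsum : ∀ j ∈ Finset.range (i+1),
      (∑ A ∈ (Finset.powersetCard i (Finset.univ : Finset (Fin n))).filter
          (fun A => (S ∩ A).card = j), (-1:ℝ)^((S ∩ A).card))
        = (-1:ℝ)^j * (S.card.choose j) * ((n - S.card).choose (i-j)) := by
    intro j hj
    rw [Finset.sum_congr rfl (fun A hA => by rw [(Finset.mem_filter.1 hA).2])]
    rw [Finset.sum_const, hcard j hj, nsmul_eq_mul]
    push_cast
    ring
  rw [Finset.sum_congr rfl hsum]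
  -- Step D : identify with kraw
  rw [kraw, ← hscard]
  refine Finset.sum_congr rfl fun j hj => ?_
  have h1 : genChoose (S.card : ℝ) j = (S.card.choose j : ℝ) := genChoose_nat _ _
  have h2 : ((n:ℝ) - S.card) = (((n - S.card : ℕ)):ℝ) := by
    have : S.card ≤ n := hscard ▸ wt_le y
    rw [Nat.cast_sub this]
  rw [h1, h2, genChoose_nat]

lemma pi_add_eq_zero_iff {n : ℕ} (u v : Fin n → ZMod 2) : u + v = 0 ↔ v = u := by
  have h : ∀ a b : ZMod 2, a + b = 0 ↔ b = a := by decide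
  simp only [funext_iff, Pi.add_apply, Pi.zero_apply]
  exact forall_congr' fun j => h (u j) (v j)

lemma ft_eval {n : ℕ} (r : ℕ) (c : ℕ → ℝ) (x : Fin n → ZMod 2) :
    ft (fun y => ∑ i ∈ Finset.range (r+1), c i * kraw n i (wt y)) x
      = if wt x ≤ r then c (wt x) else 0 := by
  have hchar : ∀ z : Fin n → ZMod 2,
      (∑ y : Fin n → ZMod 2, (-1:ℝ)^(∑ j, (y j * z j).val) * (-1:ℝ)^(∑ j, (x j * y j).val))
        = if z = x then (2:ℝ)^n else 0 := by
    intro z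
    have hterm : ∀ y : Fin n → ZMod 2,
        (-1:ℝ)^(∑ j, (y j * z j).val) * (-1:ℝ)^(∑ j, (x j * y j).val)
          = (-1:ℝ)^(∑ j, ((x + z) j * y j).val) := by
      intro y
      rw [← pow_add, ← Finset.sum_add_distrib]
      apply neg_one_pow_congr_of_mod
      rw [Finset.sum_nat_mod _ 2, Finset.sum_nat_mod _ 2 (fun j => ((x + z) j * y j).val)]
      congr 1
      refine Finset.sum_congr rfl fun j _ => ?_
      have h2 : ∀ a b c' : ZMod 2, ((c' * b).val + (a * c').val) % 2 = (((a+b) * c').val) % 2 := by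
        decide
      exact h2 (x j) (z j) (y j)
    rw [Finset.sum_congr rfl fun y _ => hterm y, char_sum]
    by_cases hzx : z = x
    · rw [if_pos hzx, if_pos]
      rw [pi_add_eq_zero_iff]; exact hzx
    · rw [if_neg hzx, if_neg]
      rw [pi_add_eq_zero_iff]; exact hzx
  unfold ft
  have hnum : (∑ y, (∑ i ∈ Finset.range (r+1), c i * kraw n i (wt y)) * (-1:ℝ)^(∑ j, (x j * y j).val))
      = if wt x ≤ r then c (wt x) * 2^n else 0 := by
    have h1 : ∀ y : Fin n → ZMod 2,
        (∑ i ∈ Finset.range (r+1), c i * kraw n i (wt y)) * (-1:ℝ)^(∑ j, (x j * y j).val)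
          = ∑ i ∈ Finset.range (r+1), c i * kraw n i (wt y) * (-1:ℝ)^(∑ j, (x j * y j).val) := by
      intro y; rw [Finset.sum_mul]
    rw [Finset.sum_congr rfl fun y _ => h1 y, Finset.sum_comm]
    have h2 : ∀ i ∈ Finset.range (r+1),
        (∑ y : Fin n → ZMod 2, c i * kraw n i (wt y) * (-1:ℝ)^(∑ j, (x j * y j).val))
          = if wt x = i then c i * 2^n else 0 := by
      intro i _
      have h3 : ∀ y : Fin n → ZMod 2,
          c i * kraw n i (wt y) * (-1:ℝ)^(∑ j, (x j * y j).val)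
            = c i * ∑ z ∈ Finset.univ.filter (fun z : Fin n → ZMod 2 => wt z = i),
                (-1:ℝ)^(∑ j, (y j * z j).val) * (-1:ℝ)^(∑ j, (x j * y j).val) := by
        intro y
        rw [← Finset.sum_mul, sum_sphere]
        ring
      rw [Finset.sum_congr rfl fun y _ => h3 y, ← Finset.mul_sum, Finset.sum_comm]
      rw [Finset.sum_congr rfl fun z _ => hchar z, Finset.sum_ite_eq']
      simp only [Finset.mem_filter, Finset.mem_univ, true_and]
      by_cases h : wt x = i
      · rw [if_pos h, if_pos h]
      · rw [if_neg h, if_neg h, mul_zero]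
    rw [Finset.sum_congr rfl h2, Finset.sum_ite_eq]
    by_cases h : wt x ≤ r
    · rw [if_pos (Finset.mem_range.2 (by omega)), if_pos h]
    · rw [if_neg (fun hc => h (by have := Finset.mem_range.1 hc; omega)), if_neg h]
  rw [hnum]
  by_cases h : wt x ≤ r
  · rw [if_pos h, if_pos h, mul_div_assoc, div_self (by positivity), mul_one]
  · rw [if_neg h, if_neg h, zero_div]

/-- The function `Λ(x) = ∑_{i=0}^{r} C(n,i)⁻¹ K_i(d-ε) K_i(|x|)` with
`d-ε ∈ [z_{1,r+1}, z_{1,r}]` has `Λ̂(0) = 1`, `Λ̂ ≥ 0`, and `Λ̂` is supported on the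
Hamming ball of radius `r`. -/
theorem Lambda_construction (n r : ℕ) (hr : r + 1 ≤ n) (d ε : ℝ)
    (z1r z1r1 : ℝ)
    (hz1 : IsFirstRoot n r z1r) (hz2 : IsFirstRoot n (r+1) z1r1)
    (hlow : z1r1 ≤ d - ε) (hhigh : d - ε ≤ z1r) :
    ft (fun x : Fin n → ZMod 2 => ∑ i ∈ Finset.range (r+1),
        ((n.choose i : ℝ))⁻¹ * kraw n i (d - ε) * kraw n i (wt x)) 0 = 1 ∧
    (∀ x, 0 ≤ ft (fun x : Fin n → ZMod 2 => ∑ i ∈ Finset.range (r+1),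
        ((n.choose i : ℝ))⁻¹ * kraw n i (d - ε) * kraw n i (wt x)) x) ∧
    (∀ x : Fin n → ZMod 2, r < wt x →
      ft (fun x : Fin n → ZMod 2 => ∑ i ∈ Finset.range (r+1),
        ((n.choose i : ℝ))⁻¹ * kraw n i (d - ε) * kraw n i (wt x)) x = 0) := by
  have h0de : 0 ≤ d - ε := le_trans hz2.1.le hlow
  have hnonneg := kraw_nonneg_of_le_firstRoot n r hr z1r hz1
  have hft : ∀ x : Fin n → ZMod 2, ft (fun x : Fin n → ZMod 2 => ∑ i ∈ Finset.range (r+1),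
        ((n.choose i : ℝ))⁻¹ * kraw n i (d - ε) * kraw n i (wt x)) x
      = if wt x ≤ r then ((n.choose (wt x) : ℝ))⁻¹ * kraw n (wt x) (d - ε) else 0 :=
    fun x => ft_eval r (fun i => ((n.choose i : ℝ))⁻¹ * kraw n i (d - ε)) x
  refine ⟨?_, ?_, ?_⟩
  · rw [hft 0]
    have hwt0 : wt (0 : Fin n → ZMod 2) = 0 := by simp [wt]
    rw [hwt0, if_pos (Nat.zero_le r)]
    simp [kraw_zero_left]
  · intro x
    rw [hft x]
    split
    · next h =>
      exact mul_nonneg (inv_nonneg.2 (Nat.cast_nonneg _))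
        (hnonneg (wt x) h (d - ε) h0de hhigh)
    · exact le_refl 0
  · intro x hx
    rw [hft x, if_neg (by omega)]
end
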